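/- arXiv:2503.11370 — 3 statements merged into one kernel-verified Lean document; each statement's English description precedes it below -/
import Mathlib

section
/- Let m, r ∈ ℕ, k ≥ 0, and let ζ ∈ C^{r−1}(I, ℝ^m) on an interval I ⊂ ℝ_{≥0}. Then for all t ∈ I, ξ_r(χ(ζ)(t)) = ζ^{(r−1)}(t) + Σ_{j=1}^{r−1} k · (d/dt)^{r−j−1} [ ξ_j(χ(ζ)(t)) ], where all the indicated derivatives exist. -/
/-! Each `ξ_{i+1}` is linear in finitely many coordinates, so differentiating
`t ↦ ξ_{i+1}(χ(ζ)(t))` just shifts `χ(ζ)(t)` by one; hence the `n`-th derivative is `ξ_{i+1}` of the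
`n`-fold shift. Unrolling the recursion gives
`ξ_r(z) = z_r + Σ_{j=1}^{r-1} k ξ_j(σ^{r-1-j} z)`, and with `z = χ(ζ)(t)` every shifted term is a
derivative of `ξ_j(χ(ζ)(t))`. -/

open Set Finset

/-- The auxiliary error variables, `xi m k i` is `ξ_{i+1}` (0-based indexing):
`ξ₁(z) = z₁`, `ξ_{i+1}(z) = ξ_i(σ(z)) + k ξ_i(z)` where `σ` is the left shift. -/
noncomputable def xi (m : ℕ) (k : ℝ) : ℕ → (ℕ → EuclideanSpace ℝ (Fin m)) → EuclideanSpace ℝ (Fin m)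
  | 0, z => z 0
  | i + 1, z => xi m k i (fun j => z (j + 1)) + k • xi m k i z

/-- `chiFam m r dζ t = χ(ζ)(t) = (ζ(t), ζ'(t), …, ζ^{(r−1)}(t)) ∈ ℝ^{rm}`,
where `dζ j = ζ^{(j)}`; entries beyond index `r` are padded by zero. -/
noncomputable def chiFam (m r : ℕ) (dζ : ℕ → ℝ → EuclideanSpace ℝ (Fin m)) (t : ℝ) :
    ℕ → EuclideanSpace ℝ (Fin m) :=
  fun j => if j < r then dζ j t else 0

section

variable {m : ℕ} {k : ℝ}

lemma xi_eq_add_sum (i : ℕ) (z : ℕ → EuclideanSpace ℝ (Fin m)) :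
    xi m k i z = z i + ∑ j ∈ Finset.Icc 1 i, k • xi m k (j - 1) (fun p => z (p + (i - j))) := by
  induction i generalizing z with
  | zero => simp [xi]
  | succ i ih =>
    show xi m k i (fun j => z (j + 1)) + k • xi m k i z = _
    have hshift : ∀ j ∈ Finset.Icc 1 i, k • xi m k (j - 1) (fun p => z (p + (i - j) + 1)) =
        k • xi m k (j - 1) (fun p => z (p + (i + 1 - j))) := by
      intro j hj
      have hji : j ≤ i := (Finset.mem_Icc.mp hj).2
      congr 2
      funext p
      congr 1
      omega
    rw [ih, sum_congr rfl hshift, sum_Icc_succ_top (by omega : 1 ≤ i + 1), Nat.add_sub_cancel,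
      Nat.sub_self]
    simp only [add_zero]
    abel

lemma hasDerivWithinAt_xi {I : Set ℝ} {t : ℝ} (i : ℕ)
    {w : ℝ → ℕ → EuclideanSpace ℝ (Fin m)} {w' : ℕ → EuclideanSpace ℝ (Fin m)}
    (hw : ∀ j ≤ i, HasDerivWithinAt (fun s => w s j) (w' j) I t) :
    HasDerivWithinAt (fun s => xi m k i (w s)) (xi m k i w') I t := by
  induction i generalizing w w' with
  | zero => exact hw 0 le_rfl
  | succ i ih =>
    exact (ih (w := fun s j => w s (j + 1)) fun j hj => hw (j + 1) (by omega)).add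
      ((ih fun j hj => hw j (by omega)).const_smul k)

end

section

variable {m r : ℕ} {k : ℝ} {I : Set ℝ} {dζ : ℕ → ℝ → EuclideanSpace ℝ (Fin m)}

lemma chiFam_of_lt {l : ℕ} (hl : l < r) (t : ℝ) : chiFam m r dζ t l = dζ l t :=
  if_pos hl

lemma hasDerivWithinAt_chiFam_shift
    (hder : ∀ j, j + 1 < r → ∀ t ∈ I, HasDerivWithinAt (dζ j) (dζ (j + 1) t) I t)
    {i n : ℕ} (h : i + n + 1 < r) {t : ℝ} (ht : t ∈ I) :
    HasDerivWithinAt (fun s => xi m k i (fun j => chiFam m r dζ s (j + n)))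
      (xi m k i (fun j => chiFam m r dζ t (j + n + 1))) I t := by
  refine hasDerivWithinAt_xi i fun j hj => ?_
  simp only [chiFam_of_lt (by omega : j + n < r), chiFam_of_lt (by omega : j + n + 1 < r)]
  exact hder (j + n) (by omega) t ht

lemma iteratedDerivWithin_xi_chiFam (hI : UniqueDiffOn ℝ I)
    (hder : ∀ j, j + 1 < r → ∀ t ∈ I, HasDerivWithinAt (dζ j) (dζ (j + 1) t) I t)
    {i n : ℕ} (h : i + n < r) {t : ℝ} (ht : t ∈ I) :
    iteratedDerivWithin n (fun s => xi m k i (chiFam m r dζ s)) I t =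
      xi m k i (fun j => chiFam m r dζ t (j + n)) := by
  induction n generalizing t with
  | zero => rfl
  | succ n ih =>
    have heq : EqOn (iteratedDerivWithin n (fun s => xi m k i (chiFam m r dζ s)) I)
        (fun s => xi m k i (fun j => chiFam m r dζ s (j + n))) I :=
      fun s hs => ih (by omega) hs
    rw [iteratedDerivWithin_succ, derivWithin_congr heq (heq ht)]
    exact (hasDerivWithinAt_chiFam_shift hder (by omega) ht).derivWithin (hI t ht)

end

theorem stmt5_general (m r : ℕ) (hr : 1 ≤ r) (k : ℝ)
    (I : Set ℝ) (hIuniq : UniqueDiffOn ℝ I)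
    -- ζ ∈ C^{r−1}(I, ℝ^m) with dζ j = ζ^{(j)}:
    (dζ : ℕ → ℝ → EuclideanSpace ℝ (Fin m))
    (hder : ∀ j, j + 1 < r → ∀ t ∈ I, HasDerivWithinAt (dζ j) (dζ (j + 1) t) I t) :
    -- all the indicated derivatives exist:
    (∀ j, 1 ≤ j → j < r → ∀ n, n < r - j - 1 →
      DifferentiableOn ℝ
        (iteratedDerivWithin n (fun s => xi m k (j - 1) (chiFam m r dζ s)) I) I) ∧
    -- the identity:
    ∀ t ∈ I,
      xi m k (r - 1) (chiFam m r dζ t) =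
        dζ (r - 1) t + ∑ j ∈ Finset.Icc 1 (r - 1),
          k • iteratedDerivWithin (r - j - 1)
            (fun s => xi m k (j - 1) (chiFam m r dζ s)) I t := by
  refine ⟨fun j hj hjr n hn t ht => ?_, fun t ht => ?_⟩
  · have hshift := hasDerivWithinAt_chiFam_shift (k := k) hder (i := j - 1) (n := n) (by omega) ht
    exact hshift.differentiableWithinAt.congr
      (fun s hs => iteratedDerivWithin_xi_chiFam hIuniq hder (by omega) hs)
      (iteratedDerivWithin_xi_chiFam hIuniq hder (by omega) ht)
  · rw [xi_eq_add_sum, chiFam_of_lt (by omega)]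
    refine congrArg _ (sum_congr rfl fun j hj => ?_)
    have hjr : j ≤ r - 1 := (Finset.mem_Icc.mp hj).2
    rw [iteratedDerivWithin_xi_chiFam hIuniq hder (by omega) ht, Nat.sub_right_comm]

/-- `ξ_r(χ(ζ)(t)) = ζ^{(r−1)}(t) + Σ_{j=1}^{r−1} k (d/dt)^{r−j−1}[ξ_j(χ(ζ)(t))]`,
where all the indicated derivatives exist (here `ξ_j = xi m k (j-1)`). -/
theorem stmt5 (m r : ℕ) (hr : 1 ≤ r) (k : ℝ) (hk : 0 ≤ k)
    (I : Set ℝ) (hI0 : I ⊆ Ici (0 : ℝ)) (hIconn : I.OrdConnected) (hIuniq : UniqueDiffOn ℝ I)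
    -- ζ ∈ C^{r−1}(I, ℝ^m) with dζ j = ζ^{(j)}:
    (dζ : ℕ → ℝ → EuclideanSpace ℝ (Fin m))
    (hcont : ∀ j, j < r → ContinuousOn (dζ j) I)
    (hder : ∀ j, j + 1 < r → ∀ t ∈ I, HasDerivWithinAt (dζ j) (dζ (j + 1) t) I t) :
    -- all the indicated derivatives exist:
    (∀ j, 1 ≤ j → j < r → ∀ n, n < r - j - 1 →
      DifferentiableOn ℝ
        (iteratedDerivWithin n (fun s => xi m k (j - 1) (chiFam m r dζ s)) I) I) ∧
    -- the identity:
    ∀ t ∈ I,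
      xi m k (r - 1) (chiFam m r dζ t) =
        dζ (r - 1) t + ∑ j ∈ Finset.Icc 1 (r - 1),
          k • iteratedDerivWithin (r - j - 1)
            (fun s => xi m k (j - 1) (chiFam m r dζ s)) I t :=
  stmt5_general m r hr k I hIuniq dζ hder
end

section
/- Let m ∈ ℕ, k ≥ 2, c > 0, and let e : [a, b] → ℝ^m be differentiable and v : [a, b] → ℝ^m be such that e'(t) = v(t) − k e(t), ‖v(t)‖ ≤ c, and c/√2 ≤ ‖e(t)‖ ≤ c for all t ∈ [a, b]. Then (d/dt) (½ ‖e(t)‖²) ≤ c² (−k/2 + 1) ≤ 0 for all t ∈ [a, b]; in particular t ↦ ‖e(t)‖² is non-increasing on [a, b] and ‖e(b)‖ ≤ ‖e(a)‖. -/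
open Set

open scoped RealInnerProductSpace

/-! Writing `e' = v - k e`, the derivative of `½‖e‖²` is `⟪e, v⟫ - k‖e‖² ≤ c² - k c²/2`, using
Cauchy–Schwarz with `‖e‖, ‖v‖ ≤ c` and the lower bound `‖e‖² ≥ c²/2`. For `k ≥ 2` this is
nonpositive, so `‖e‖²` is antitone by the mean value theorem. -/

section

variable {E : Type*} [NormedAddCommGroup E] [InnerProductSpace ℝ E]

theorem HasDerivWithinAt.half_norm_sq {f : ℝ → E} {f' : E} {s : Set ℝ} {t : ℝ}
    (hf : HasDerivWithinAt f f' s t) :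
    HasDerivWithinAt (fun u => 1 / 2 * ‖f u‖ ^ 2) ⟪f t, f'⟫ s t :=
  (hf.norm_sq.const_mul (1 / 2)).congr_deriv (by ring)

theorem real_inner_sub_smul_self_le {x y : E} {k c : ℝ} (hk : 0 ≤ k) (hy : ‖y‖ ≤ c)
    (hlb : c / Real.sqrt 2 ≤ ‖x‖) (hub : ‖x‖ ≤ c) :
    ⟪x, y - k • x⟫ ≤ c ^ 2 * (-(k / 2) + 1) := by
  have hxy : ⟪x, y⟫ ≤ c ^ 2 :=
    calc ⟪x, y⟫ ≤ ‖x‖ * ‖y‖ := real_inner_le_norm x y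
      _ ≤ c * c := mul_le_mul hub hy (norm_nonneg y) ((norm_nonneg x).trans hub)
      _ = c ^ 2 := (sq c).symm
  have hx : c ^ 2 / 2 ≤ ‖x‖ ^ 2 := by
    have := pow_le_pow_left₀ (div_nonneg ((norm_nonneg x).trans hub) (Real.sqrt_nonneg 2)) hlb 2
    rwa [div_pow, Real.sq_sqrt zero_le_two] at this
  rw [inner_sub_right, real_inner_smul_right, real_inner_self_eq_norm_sq]
  nlinarith

theorem antitoneOn_norm_sq_of_inner_deriv_nonpos {D : Set ℝ} (hD : Convex ℝ D) {f f' : ℝ → E}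
    (hf : ∀ t ∈ D, HasDerivWithinAt f (f' t) D t) (hf' : ∀ t ∈ D, ⟪f t, f' t⟫ ≤ 0) :
    AntitoneOn (fun t => ‖f t‖ ^ 2) D := by
  refine antitoneOn_of_hasDerivWithinAt_nonpos hD (f' := fun t => 2 * ⟪f t, f' t⟫)
    (fun t ht => (hf t ht).norm_sq.continuousWithinAt)
    (fun t ht => ((hf t (interior_subset ht)).norm_sq).mono interior_subset)
    (fun t ht => ?_)
  linarith [hf' t (interior_subset ht)]

end

theorem stmt8_general (m : ℕ) (k c : ℝ) (hk : 2 ≤ k)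
    (a b : ℝ) (hab : a ≤ b)
    (e v : ℝ → EuclideanSpace ℝ (Fin m))
    -- e'(t) = v(t) − k e(t):
    (hder : ∀ t ∈ Icc a b, HasDerivWithinAt e (v t - k • e t) (Icc a b) t)
    (hv : ∀ t ∈ Icc a b, ‖v t‖ ≤ c)
    (hlb : ∀ t ∈ Icc a b, c / Real.sqrt 2 ≤ ‖e t‖)
    (hub : ∀ t ∈ Icc a b, ‖e t‖ ≤ c) :
    -- (d/dt)(½‖e(t)‖²) ≤ c²(−k/2 + 1) ≤ 0 on [a,b]:
    (∀ t ∈ Icc a b, ∃ d : ℝ,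
      HasDerivWithinAt (fun s => (1 / 2) * ‖e s‖ ^ 2) d (Icc a b) t ∧
      d ≤ c ^ 2 * (-(k / 2) + 1) ∧ c ^ 2 * (-(k / 2) + 1) ≤ 0) ∧
    -- t ↦ ‖e(t)‖² is non-increasing on [a,b]:
    AntitoneOn (fun t => ‖e t‖ ^ 2) (Icc a b) ∧
    ‖e b‖ ≤ ‖e a‖ := by
  have hbound : c ^ 2 * (-(k / 2) + 1) ≤ 0 :=
    mul_nonpos_of_nonneg_of_nonpos (sq_nonneg c) (by linarith)
  have hinner : ∀ t ∈ Icc a b, ⟪e t, v t - k • e t⟫ ≤ c ^ 2 * (-(k / 2) + 1) :=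
    fun t ht => real_inner_sub_smul_self_le (by linarith) (hv t ht) (hlb t ht) (hub t ht)
  have hanti : AntitoneOn (fun t => ‖e t‖ ^ 2) (Icc a b) :=
    antitoneOn_norm_sq_of_inner_deriv_nonpos (convex_Icc a b) hder
      fun t ht => (hinner t ht).trans hbound
  refine ⟨fun t ht => ⟨_, (hder t ht).half_norm_sq, hinner t ht, hbound⟩, hanti, ?_⟩
  exact (sq_le_sq₀ (norm_nonneg _) (norm_nonneg _)).1
    (hanti (left_mem_Icc.2 hab) (right_mem_Icc.2 hab) hab)

theorem stmt8 (m : ℕ) (k c : ℝ) (hk : 2 ≤ k) (hc : 0 < c)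
    (a b : ℝ) (hab : a ≤ b)
    (e v : ℝ → EuclideanSpace ℝ (Fin m))
    -- e'(t) = v(t) − k e(t):
    (hder : ∀ t ∈ Icc a b, HasDerivWithinAt e (v t - k • e t) (Icc a b) t)
    (hv : ∀ t ∈ Icc a b, ‖v t‖ ≤ c)
    (hlb : ∀ t ∈ Icc a b, c / Real.sqrt 2 ≤ ‖e t‖)
    (hub : ∀ t ∈ Icc a b, ‖e t‖ ≤ c) :
    -- (d/dt)(½‖e(t)‖²) ≤ c²(−k/2 + 1) ≤ 0 on [a,b]:
    (∀ t ∈ Icc a b, ∃ d : ℝ,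
      HasDerivWithinAt (fun s => (1 / 2) * ‖e s‖ ^ 2) d (Icc a b) t ∧
      d ≤ c ^ 2 * (-(k / 2) + 1) ∧ c ^ 2 * (-(k / 2) + 1) ≤ 0) ∧
    -- t ↦ ‖e(t)‖² is non-increasing on [a,b]:
    AntitoneOn (fun t => ‖e t‖ ^ 2) (Icc a b) ∧
    ‖e b‖ ≤ ‖e a‖ :=
  stmt8_general m k c hk a b hab e v hder hv hlb hub
end

section
/- Let m ∈ ℕ, ε > 0, a < b ≤ ∞, and let w : [a, b) → ℝ^m be locally absolutely continuous with ‖w(a)‖ < ε. Suppose that for almost every t ∈ [a, b) with ‖w(t)‖ ≥ ε one has ⟨w(t), w'(t)⟩ ≤ 0. Then ‖w(t)‖ ≤ ε for all t ∈ [a, b). -/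
/-!
Fix `T ∈ [a, b)` and let `c` be the last time in `[a, T]` with `‖w c‖ ≤ ε`. On `(c, T]` we have
`‖w‖ > ε`, hence `⟪w, w'⟫ ≤ 0` a.e., and the energy identity
`‖w T‖² - ‖w c‖² = 2 ∫_c^T ⟪w, w'⟫` gives `‖w T‖ ≤ ‖w c‖ ≤ ε`.

The energy identity comes from writing `w s = w c + F s` with `F s = ∫_c^s w'`: integrating
`⟪w' s, w' u⟫` over `(c, T]²` by Fubini, separately below and above the diagonal, gives
`‖F T‖² = 2 ∫_c^T ⟪F, w'⟫`.
-/

open Set MeasureTheory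
open scoped RealInnerProductSpace

variable {E F G : Type*} [NormedAddCommGroup E] [NormedSpace ℝ E]
  [NormedAddCommGroup F] [NormedSpace ℝ F] [NormedAddCommGroup G] [NormedSpace ℝ G]

lemma setIntegral_Ioc_add_setIntegral_Ioc {f : ℝ → E} {a b c : ℝ} (hab : a ≤ b) (hbc : b ≤ c)
    (hf : IntegrableOn f (Ioc a c)) :
    (∫ u in Ioc a b, f u) + ∫ u in Ioc b c, f u = ∫ u in Ioc a c, f u := by
  rw [← setIntegral_union (Ioc_disjoint_Ioc_of_le le_rfl) measurableSet_Ioc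
    (hf.mono_set (Ioc_subset_Ioc_right hbc)) (hf.mono_set (Ioc_subset_Ioc_left hab)),
    Ioc_union_Ioc_eq_Ioc hab hbc]

lemma setIntegral_Ioc_indicator_Iic {f : ℝ → E} {c s t : ℝ} (hst : s ≤ t) :
    ∫ u in Ioc c t, (Iic s).indicator f u = ∫ u in Ioc c s, f u := by
  rw [setIntegral_indicator measurableSet_Iic, Ioc_inter_Iic, inf_of_le_right hst]

lemma setIntegral_Ioc_indicator_Iio {f : ℝ → E} {c s t : ℝ} (hst : s ≤ t) :
    ∫ u in Ioc c t, (Iio s).indicator f u = ∫ u in Ioc c s, f u := by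
  rw [setIntegral_indicator measurableSet_Iio, ← setIntegral_Ioc_indicator_Iic hst,
    setIntegral_indicator measurableSet_Iic]
  exact setIntegral_congr_set ((Filter.EventuallyEq.refl _ _).inter Iio_ae_eq_Iic)

namespace ContinuousLinearMap

variable {α β : Type*} [MeasurableSpace α] [MeasurableSpace β] {μ : Measure α} {ν : Measure β}
  (B : E →L[ℝ] F →L[ℝ] G)

lemma integrable_prod_bilin {f : α → E} {g : β → F} (hf : Integrable f μ) (hg : Integrable g ν) :
    Integrable (fun z => B (f z.1) (g z.2)) (μ.prod ν) := by
  refine ((hf.norm.mul_prod hg.norm).const_mul ‖B‖).mono'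
    (B.aestronglyMeasurable_comp₂ hf.1.comp_fst hg.1.comp_snd) (ae_of_all _ fun z => ?_)
  rw [← mul_assoc]
  exact B.le_opNorm₂ _ _

variable [CompleteSpace E] [CompleteSpace F] [CompleteSpace G]

lemma integral_prod_bilin [SFinite μ] [SFinite ν] {f : α → E} {g : β → F} (hf : Integrable f μ)
    (hg : Integrable g ν) :
    ∫ z, B (f z.1) (g z.2) ∂(μ.prod ν) = B (∫ x, f x ∂μ) (∫ y, g y ∂ν) := by
  rw [integral_prod _ (B.integrable_prod_bilin hf hg)]
  simp_rw [(B _).integral_comp_comm hg]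
  exact (B.flip _).integral_comp_comm hf

/-- Integration by parts for primitives of integrable functions. -/
theorem apply_setIntegral_Ioc_eq_add {f : ℝ → E} {g : ℝ → F} {c t : ℝ}
    (hf : IntegrableOn f (Ioc c t)) (hg : IntegrableOn g (Ioc c t)) :
    B (∫ u in Ioc c t, f u) (∫ u in Ioc c t, g u) =
      (∫ s in Ioc c t, B (f s) (∫ u in Ioc c s, g u)) +
        ∫ s in Ioc c t, B (∫ u in Ioc c s, f u) (g s) := by
  set μ := volume.restrict (Ioc c t)
  set K : ℝ × ℝ → G := fun z => B (f z.1) (g z.2)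
  have hK : Integrable K (μ.prod μ) := B.integrable_prod_bilin hf hg
  set A := {z : ℝ × ℝ | z.2 ≤ z.1}
  have hA : MeasurableSet A := measurableSet_le measurable_snd measurable_fst
  have lower : ∫ z, A.indicator K z ∂μ.prod μ = ∫ s in Ioc c t, B (f s) (∫ u in Ioc c s, g u) := by
    rw [integral_prod _ (hK.indicator hA)]
    refine setIntegral_congr_fun measurableSet_Ioc fun s hs => ?_
    change ∫ u in Ioc c t, (Iic s).indicator (fun u => B (f s) (g u)) u = _
    rw [setIntegral_Ioc_indicator_Iic hs.2,
      (B (f s)).integral_comp_comm (hg.mono_set (Ioc_subset_Ioc_right hs.2))]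
  have upper : ∫ z, Aᶜ.indicator K z ∂μ.prod μ = ∫ s in Ioc c t, B (∫ u in Ioc c s, f u) (g s) := by
    rw [integral_prod_symm _ (hK.indicator hA.compl)]
    refine setIntegral_congr_fun measurableSet_Ioc fun s hs => ?_
    change ∫ u in Ioc c t, (Ici s)ᶜ.indicator (fun u => B.flip (g s) (f u)) u = _
    rw [compl_Ici, setIntegral_Ioc_indicator_Iio hs.2,
      (B.flip (g s)).integral_comp_comm (hf.mono_set (Ioc_subset_Ioc_right hs.2)), flip_apply]
  rw [← lower, ← upper, integral_indicator hA, integral_indicator hA.compl,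
    integral_add_compl hA hK, B.integral_prod_bilin hf hg]

end ContinuousLinearMap

lemma exists_forall_Ioc_lt_of_continuousOn {g : ℝ → ℝ} {a T ε : ℝ} (haT : a ≤ T)
    (hg : ContinuousOn g (Icc a T)) (hga : g a ≤ ε) :
    ∃ c ∈ Icc a T, g c ≤ ε ∧ ∀ s ∈ Ioc c T, ε < g s := by
  set L := Icc a T ∩ g ⁻¹' Iic ε
  have hL : IsClosed L := hg.preimage_isClosed_of_isClosed isClosed_Icc isClosed_Iic
  have hbdd : BddAbove L := ⟨T, fun s hs => hs.1.2⟩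
  obtain ⟨hc, hgc⟩ : sSup L ∈ L := hL.csSup_mem ⟨a, ⟨le_rfl, haT⟩, hga⟩ hbdd
  refine ⟨sSup L, hc, hgc, fun s hs => lt_of_not_ge fun hgs => hs.1.not_ge ?_⟩
  exact le_csSup hbdd ⟨⟨hc.1.trans hs.1.le, hs.2⟩, hgs⟩

section InnerProduct

variable {H : Type*} [NormedAddCommGroup H] [InnerProductSpace ℝ H]
  {f : ℝ → H} {c t : ℝ}

lemma norm_setIntegral_Ioc_sq [CompleteSpace H] (hf : IntegrableOn f (Ioc c t)) :
    ‖∫ u in Ioc c t, f u‖ ^ 2 = 2 * ∫ s in Ioc c t, ⟪∫ u in Ioc c s, f u, f s⟫ := by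
  rw [← real_inner_self_eq_norm_sq, two_mul]
  refine ((innerSL ℝ).apply_setIntegral_Ioc_eq_add hf hf).trans ?_
  congr 1
  exact integral_congr_ae (ae_of_all _ fun s => real_inner_comm _ _)

lemma integrableOn_inner_setIntegral_Ioc (hf : IntegrableOn f (Ioc c t)) :
    IntegrableOn (fun s => ⟪∫ u in Ioc c s, f u, f s⟫) (Ioc c t) := by
  have hF : ContinuousOn (fun s => ∫ u in Ioc c s, f u) (Icc c t) :=
    intervalIntegral.continuousOn_primitive ((integrableOn_Icc_iff_integrableOn_Ioc).2 hf)
  obtain ⟨C, hC⟩ := isCompact_Icc.exists_bound_of_continuousOn hF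
  exact (innerSL ℝ).integrable_of_bilin_of_bdd_left C
    ((hF.mono Ioc_subset_Icc_self).aestronglyMeasurable measurableSet_Ioc)
    ((ae_restrict_iff' measurableSet_Ioc).2 (ae_of_all _ fun s hs => hC s (Ioc_subset_Icc_self hs)))
    hf

theorem norm_sq_sub_norm_sq_eq_integral_inner [CompleteSpace H] {w : ℝ → H} (hct : c ≤ t)
    (hf : IntegrableOn f (Ioc c t)) (hw : ∀ s ∈ Icc c t, w s = w c + ∫ u in Ioc c s, f u) :
    ‖w t‖ ^ 2 - ‖w c‖ ^ 2 = 2 * ∫ s in Ioc c t, ⟪w s, f s⟫ := by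
  have hsplit : ∫ s in Ioc c t, ⟪w s, f s⟫ =
      (∫ s in Ioc c t, ⟪w c, f s⟫) + ∫ s in Ioc c t, ⟪∫ u in Ioc c s, f u, f s⟫ := by
    rw [← integral_add (hf.const_inner _) (integrableOn_inner_setIntegral_Ioc hf)]
    refine setIntegral_congr_fun measurableSet_Ioc fun s hs => ?_
    rw [hw s (Ioc_subset_Icc_self hs), inner_add_left]
  rw [hsplit, mul_add, ← norm_setIntegral_Ioc_sq hf, integral_inner hf, hw t ⟨hct, le_rfl⟩,
    norm_add_sq_real]
  ring

theorem norm_le_of_inner_nonpos_of_lt_norm {w f : ℝ → H} {a T ε : ℝ} [CompleteSpace H]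
    (haT : a ≤ T) (hf : IntegrableOn f (Ioc a T))
    (hw : ∀ s ∈ Icc a T, w s = w a + ∫ u in Ioc a s, f u) (hwa : ‖w a‖ ≤ ε)
    (hinner : ∀ᵐ s ∂volume.restrict (Ioc a T), ε < ‖w s‖ → ⟪w s, f s⟫ ≤ 0) :
    ‖w T‖ ≤ ε := by
  have hcont : ContinuousOn w (Icc a T) :=
    (continuousOn_const.add (intervalIntegral.continuousOn_primitive
      ((integrableOn_Icc_iff_integrableOn_Ioc).2 hf))).congr hw
  obtain ⟨c, ⟨hac, hcT⟩, hwc, hlt⟩ := exists_forall_Ioc_lt_of_continuousOn haT hcont.norm hwa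
  have hrep : ∀ s ∈ Icc c T, w s = w c + ∫ u in Ioc c s, f u := fun s hs => by
    rw [hw s ⟨hac.trans hs.1, hs.2⟩, hw c ⟨hac, hcT⟩, add_assoc,
      setIntegral_Ioc_add_setIntegral_Ioc hac hs.1 (hf.mono_set (Ioc_subset_Ioc_right hs.2))]
  have hnonpos : ∫ s in Ioc c T, ⟪w s, f s⟫ ≤ 0 := by
    refine setIntegral_nonpos_of_ae_restrict ?_
    filter_upwards [ae_restrict_mem measurableSet_Ioc,
      ae_restrict_of_ae_restrict_of_subset (Ioc_subset_Ioc_left hac) hinner] with s hs hinner_s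
    exact hinner_s (hlt s hs)
  have hsq : ‖w T‖ ^ 2 ≤ ε ^ 2 := by
    nlinarith [norm_sq_sub_norm_sq_eq_integral_inner hcT (hf.mono_set (Ioc_subset_Ioc_left hac))
      hrep, norm_nonneg (w c)]
  exact (pow_le_pow_iff_left₀ (norm_nonneg _) ((norm_nonneg _).trans hwa) two_ne_zero).1 hsq

end InnerProduct

theorem stmt9_general (m : ℕ) (ε : ℝ) (a : ℝ) (b : EReal)
    (w w' : ℝ → EuclideanSpace ℝ (Fin m))
    -- S = [a, b):
    (S : Set ℝ) (hS : S = {t : ℝ | a ≤ t ∧ (t : EReal) < b})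
    -- w is locally absolutely continuous on [a, b): it is differentiable a.e.
    -- with derivative w' and satisfies the FTC on compact subintervals:
    (hInt : ∀ t ∈ S, IntervalIntegrable w' volume a t)
    (hFTC : ∀ t ∈ S, w t = w a + ∫ s in a..t, w' s)
    (hwa : ‖w a‖ < ε)
    -- for a.e. t ∈ [a,b) with ‖w(t)‖ ≥ ε one has ⟨w(t), w'(t)⟩ ≤ 0:
    (hdecr : ∀ᵐ t ∂(volume.restrict S), ε ≤ ‖w t‖ → (inner ℝ (w t) (w' t) : ℝ) ≤ 0) :
    ∀ t ∈ S, ‖w t‖ ≤ ε := by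
  intro T hT
  obtain ⟨haT, hTb⟩ : a ≤ T ∧ (T : EReal) < b := by rwa [hS] at hT
  have hIccS : Icc a T ⊆ S := fun s hs => by
    rw [hS]
    exact ⟨hs.1, (EReal.coe_le_coe_iff.2 hs.2).trans_lt hTb⟩
  refine norm_le_of_inner_nonpos_of_lt_norm haT
    ((intervalIntegrable_iff_integrableOn_Ioc_of_le haT).1 (hInt T hT)) (fun s hs => ?_) hwa.le
    ((ae_restrict_of_ae_restrict_of_subset (Ioc_subset_Icc_self.trans hIccS) hdecr).mono
      fun s hs hlt => hs hlt.le)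
  rw [hFTC s (hIccS hs), intervalIntegral.integral_of_le hs.1]

theorem stmt9 (m : ℕ) (ε : ℝ) (hε : 0 < ε) (a : ℝ) (b : EReal) (hab : (a : EReal) < b)
    (w w' : ℝ → EuclideanSpace ℝ (Fin m))
    -- S = [a, b):
    (S : Set ℝ) (hS : S = {t : ℝ | a ≤ t ∧ (t : EReal) < b})
    -- w is locally absolutely continuous on [a, b): it is differentiable a.e.
    -- with derivative w' and satisfies the FTC on compact subintervals:
    (hInt : ∀ t ∈ S, IntervalIntegrable w' volume a t)
    (hFTC : ∀ t ∈ S, w t = w a + ∫ s in a..t, w' s)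
    (hderiv : ∀ᵐ t ∂(volume.restrict S), HasDerivAt w (w' t) t)
    (hwa : ‖w a‖ < ε)
    -- for a.e. t ∈ [a,b) with ‖w(t)‖ ≥ ε one has ⟨w(t), w'(t)⟩ ≤ 0:
    (hdecr : ∀ᵐ t ∂(volume.restrict S), ε ≤ ‖w t‖ → (inner ℝ (w t) (w' t) : ℝ) ≤ 0) :
    ∀ t ∈ S, ‖w t‖ ≤ ε :=
  stmt9_general m ε a b w w' S hS hInt hFTC hwa hdecr
end
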